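/- Let S_n be a sum of n i.i.d. Rademacher random variables and let w_n, m_n ≥ 1 be sequences with w_n·m_n = o(√n) and w_n⁵ = o(n^{3/2}). Then the ratio P(S_n ≥ w_n√n - m_n) / P(S_n ≥ w_n√n + m_n) is O(1), i.e. bounded above by an absolute constant for all large n. -/

import Mathlib

open Filter Asymptotics

/-- `radTailCount n x = ∑_{k : 2k-n ≥ x} C(n,k)`, so that a sum `S_n` of `n` i.i.d.
Rademacher variables satisfies `P(S_n ≥ x) = radTailCount n x / 2^n`. -/
noncomputable def radTailCount (n : ℕ) (x : ℝ) : ℝ :=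
  ∑ k ∈ Finset.range (n + 1),
    if x ≤ 2 * (k : ℝ) - n then (n.choose k : ℝ) else 0

/-!
The tail `P(S_n ≥ y)` is a binomial tail `T(a) = ∑_{k ≥ a} C(n,k)` with `a = ⌈(n + y)/2⌉`.
Above the centre the ratios `C(n,k+1)/C(n,k) = (n-k)/(k+1)` are at most `(n-a)/(a+1)`, which
gives the Mills-type bound `T(a)(2a+1-n) ≤ (a+1) C(n,a)`; in the other direction `T(b)` contains
a window of `ℓ+1` coefficients, each at least `C(n,b+ℓ)`. For `x = w√n` the window length
`ℓ ≈ n/x = √n/w` makes the two bounds match up to a constant, and over the distance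
`b + ℓ - a ≈ m + n/x` every ratio `C(n,k)/C(n,k+1)` is `1 + O(x/n)`, so
`C(n,a) ≤ exp(O(m x/n + 1)) C(n,b+ℓ)`, which is `O(C(n,b+ℓ))` once `w m ≤ √n/20`.
-/

open Finset Real

noncomputable def binomTail (n a : ℕ) : ℝ :=
  ∑ k ∈ Ico a (n + 1), (n.choose k : ℝ)

lemma binomTail_nonneg (n a : ℕ) : 0 ≤ binomTail n a :=
  sum_nonneg fun _ _ => Nat.cast_nonneg _

lemma radTailCount_eq_binomTail (n : ℕ) (x : ℝ) :
    radTailCount n x = binomTail n ⌈(n + x) / 2⌉₊ := by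
  rw [radTailCount, binomTail, ← sum_filter]
  congr 1
  ext k
  simp only [mem_filter, mem_range, mem_Ico, Nat.ceil_le, div_le_iff₀ (two_pos : (0:ℝ) < 2)]
  constructor <;> rintro ⟨h₁, h₂⟩ <;> constructor <;> linarith

lemma cast_choose_succ_right_eq {n k : ℕ} (hk : k ≤ n) :
    (n.choose (k + 1) : ℝ) * (k + 1) = n.choose k * (n - k) := by
  exact_mod_cast Nat.choose_succ_right_eq n k

lemma choose_le_choose_of_half_le {n k l : ℕ} (hk : n ≤ 2 * k) (hkl : k ≤ l) :
    n.choose l ≤ n.choose k := by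
  induction l, hkl using Nat.le_induction with
  | base => exact le_rfl
  | succ l hkl ih =>
    refine le_trans (Nat.le_of_mul_le_mul_right ?_ l.succ_pos) ih
    rw [Nat.choose_succ_right_eq]
    exact Nat.mul_le_mul_left _ (by omega)

lemma binomTail_mul_le (n a : ℕ) (ha : a ≤ n) :
    binomTail n a * (2 * a + 1 - n) ≤ n.choose a * (a + 1) := by
  have hsplit : binomTail n a = n.choose a + ∑ k ∈ Ico a n, (n.choose (k + 1) : ℝ) := by
    rw [binomTail, sum_eq_sum_Ico_succ_bot (by omega), sum_Ico_add' (fun k => (n.choose k : ℝ))]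
  have hstep : ∀ k ∈ Ico a n, (n.choose (k + 1) : ℝ) * (a + 1) ≤ (n - a) * n.choose k := by
    intro k hk
    obtain ⟨hak, hkn⟩ := mem_Ico.mp hk
    have hak' : (a : ℝ) ≤ k := by exact_mod_cast hak
    calc (n.choose (k + 1) : ℝ) * (a + 1) ≤ n.choose (k + 1) * (k + 1) := by gcongr
      _ = n.choose k * (n - k) := cast_choose_succ_right_eq hkn.le
      _ ≤ (n - a) * n.choose k := by rw [mul_comm]; gcongr
  have hsub : ∑ k ∈ Ico a n, (n.choose k : ℝ) ≤ binomTail n a :=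
    sum_le_sum_of_subset_of_nonneg (Ico_subset_Ico le_rfl n.le_succ) fun _ _ _ => by positivity
  have hna : (0 : ℝ) ≤ n - a := by simp [ha]
  have := sum_le_sum hstep
  rw [← sum_mul, ← mul_sum] at this
  nlinarith [mul_le_mul_of_nonneg_left hsub hna]

lemma choose_le_mul_choose_succ {n k c : ℕ} (hkc : k < c) (hcn : c ≤ n) :
    (n.choose k : ℝ) ≤ c / (n + 1 - c) * n.choose (k + 1) := by
  have hpos : (0 : ℝ) < n + 1 - c := by
    have : (c : ℝ) ≤ n := by exact_mod_cast hcn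
    linarith
  have hkc' : (k : ℝ) + 1 ≤ c := by exact_mod_cast hkc
  have hnk : (0 : ℝ) < n - k := by
    have : (k : ℝ) < n := by exact_mod_cast hkc.trans_le hcn
    linarith
  rw [div_mul_eq_mul_div, le_div_iff₀ hpos]
  refine le_of_mul_le_mul_right ?_ hnk
  calc (n.choose k : ℝ) * (n + 1 - c) * (n - k) = n.choose (k + 1) * (k + 1) * (n + 1 - c) := by
        rw [cast_choose_succ_right_eq (by omega)]; ring
    _ ≤ c * n.choose (k + 1) * (n - k) := by
        have : ((k : ℝ) + 1) * (n + 1 - c) ≤ c * (n - k) := by nlinarith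
        nlinarith [Nat.cast_nonneg (α := ℝ) (n.choose (k + 1))]

lemma choose_le_pow_mul_choose {n a c : ℕ} (hac : a ≤ c) (hcn : c ≤ n) :
    (n.choose a : ℝ) ≤ (c / (n + 1 - c)) ^ (c - a) * n.choose c := by
  have hρ : (0 : ℝ) ≤ c / (n + 1 - c) := by
    have : (c : ℝ) ≤ n := by exact_mod_cast hcn
    exact div_nonneg (by positivity) (by linarith)
  suffices h : ∀ d ≤ c, (n.choose (c - d) : ℝ) ≤ (c / (n + 1 - c)) ^ d * n.choose c by
    simpa [Nat.sub_sub_self hac] using h (c - a) (Nat.sub_le c a)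
  intro d hd
  induction d with
  | zero => simp
  | succ d ih =>
    have hk : c - (d + 1) + 1 = c - d := by omega
    calc (n.choose (c - (d + 1)) : ℝ)
        ≤ c / (n + 1 - c) * n.choose (c - d) := hk ▸ choose_le_mul_choose_succ (by omega) hcn
      _ ≤ c / (n + 1 - c) * ((c / (n + 1 - c)) ^ d * n.choose c) := by gcongr; exact ih (by omega)
      _ = (c / (n + 1 - c)) ^ (d + 1) * n.choose c := by ring

lemma choose_le_exp_mul_choose {n a c : ℕ} (hac : a ≤ c) (hcn : c ≤ n) :
    (n.choose a : ℝ) ≤ exp ((c - a) * (2 * c - n - 1) / (n + 1 - c)) * n.choose c := by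
  have hpos : (0 : ℝ) < n + 1 - c := by
    have : (c : ℝ) ≤ n := by exact_mod_cast hcn
    linarith
  have hρ : (0 : ℝ) ≤ c / (n + 1 - c) := div_nonneg (by positivity) hpos.le
  have hρ_sub : (c / (n + 1 - c) : ℝ) - 1 = (2 * c - n - 1) / (n + 1 - c) := by
    field_simp; ring
  have hpow :
      (c / (n + 1 - c) : ℝ) ^ (c - a) ≤ exp ((c - a) * (2 * c - n - 1) / (n + 1 - c)) := by
    rw [mul_div_assoc, ← hρ_sub, ← Nat.cast_sub hac, exp_nat_mul]
    exact pow_le_pow_left₀ hρ (by linarith [add_one_le_exp (c / (n + 1 - c) - 1)]) _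
  exact (choose_le_pow_mul_choose hac hcn).trans (by gcongr)

lemma succ_mul_choose_le_binomTail {n b ℓ : ℕ} (hb : n ≤ 2 * b) (hbℓ : b + ℓ ≤ n) :
    ((ℓ : ℝ) + 1) * n.choose (b + ℓ) ≤ binomTail n b := by
  have hmono : ∀ k ∈ Ico b (b + ℓ + 1), (n.choose (b + ℓ) : ℝ) ≤ n.choose k := by
    intro k hk
    obtain ⟨hbk, hkℓ⟩ := mem_Ico.mp hk
    exact_mod_cast choose_le_choose_of_half_le (by omega) (by omega)
  calc ((ℓ : ℝ) + 1) * n.choose (b + ℓ)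
        = #(Ico b (b + ℓ + 1)) • (n.choose (b + ℓ) : ℝ) := by
        rw [Nat.card_Ico, show b + ℓ + 1 - b = ℓ + 1 by omega, nsmul_eq_mul]; push_cast; ring
    _ ≤ ∑ k ∈ Ico b (b + ℓ + 1), (n.choose k : ℝ) := card_nsmul_le_sum _ _ _ hmono
    _ ≤ binomTail n b :=
        sum_le_sum_of_subset_of_nonneg (Ico_subset_Ico le_rfl (by omega)) fun _ _ _ => by positivity

lemma binomTail_mul_le_exp_mul_binomTail {n a b ℓ : ℕ} (hab : a ≤ b) (hb : n ≤ 2 * b)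
    (hbℓ : b + ℓ ≤ n) :
    binomTail n a * (2 * a + 1 - n) * (ℓ + 1) ≤
      exp ((b + ℓ - a) * (2 * (b + ℓ) - n - 1) / (n + 1 - (b + ℓ))) * (a + 1)
        * binomTail n b := by
  have hexp := choose_le_exp_mul_choose (n := n) (hab.trans (b.le_add_right ℓ)) hbℓ
  push_cast at hexp
  calc binomTail n a * (2 * a + 1 - n) * (ℓ + 1) ≤ n.choose a * (a + 1) * (ℓ + 1) :=
        mul_le_mul_of_nonneg_right (binomTail_mul_le n a (by omega)) (by positivity)
    _ ≤ exp ((b + ℓ - a) * (2 * (b + ℓ) - n - 1) / (n + 1 - (b + ℓ))) * n.choose (b + ℓ)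
          * (a + 1) * (ℓ + 1) := by gcongr
    _ = exp ((b + ℓ - a) * (2 * (b + ℓ) - n - 1) / (n + 1 - (b + ℓ))) * (a + 1)
          * ((ℓ + 1) * n.choose (b + ℓ)) := by ring
    _ ≤ _ := by gcongr; exact succ_mul_choose_le_binomTail hb hbℓ

theorem radTailCount_sub_le (n : ℕ) {x M : ℝ} (hM : 1 ≤ M) (hx : 0 < x)
    (hnx : (n : ℝ) ≤ x ^ 2) (hxn : 20 * x ≤ n) (hMx : 2 * M * x ≤ n) :
    radTailCount n (x - M) ≤ 2 * exp 40 * radTailCount n (x + M) := by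
  set E : ℝ := n / x
  have hEx : E * x = n := div_mul_cancel₀ _ hx.ne'
  have hEle : E ≤ x := by rw [div_le_iff₀ hx]; nlinarith
  have hME : 2 * M ≤ E := by rw [le_div_iff₀ hx]; linarith
  rw [radTailCount_eq_binomTail, radTailCount_eq_binomTail]
  set a := ⌈(n + (x - M)) / 2⌉₊
  set b := ⌈(n + (x + M)) / 2⌉₊
  set ℓ := ⌈E⌉₊
  have ha : (n + (x - M)) / 2 ≤ a ∧ a < (n + (x - M)) / 2 + 1 :=
    ⟨Nat.le_ceil _, Nat.ceil_lt_add_one (by linarith)⟩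
  have hb : (n + (x + M)) / 2 ≤ b ∧ b < (n + (x + M)) / 2 + 1 :=
    ⟨Nat.le_ceil _, Nat.ceil_lt_add_one (by linarith)⟩
  have hℓ : E ≤ ℓ ∧ ℓ < E + 1 := ⟨Nat.le_ceil _, Nat.ceil_lt_add_one (by linarith)⟩
  have hab : a ≤ b := Nat.ceil_mono (by linarith)
  have hb2 : n ≤ 2 * b := by exact_mod_cast (by linarith : (n : ℝ) ≤ 2 * b)
  have hgap : (n : ℝ) / 3 < n + 1 - (b + ℓ) := by linarith
  have hbℓ : b + ℓ ≤ n :=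
    Nat.lt_succ_iff.mp (by exact_mod_cast (by linarith : (b : ℝ) + ℓ < n + 1))
  have hexp : ((b : ℝ) + ℓ - a) * (2 * (b + ℓ) - n - 1) / (n + 1 - (b + ℓ)) ≤ 40 := by
    have hlen : (b : ℝ) + ℓ - a ≤ 5 / 2 * E := by linarith
    have hpos : 0 ≤ 2 * ((b : ℝ) + ℓ) - n - 1 := by linarith
    have hheight : 2 * ((b : ℝ) + ℓ) - n - 1 ≤ 5 * x := by linarith
    rw [div_le_iff₀ (by linarith)]
    linarith [mul_le_mul hlen hheight hpos (by linarith)]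
  have h2a : x / 2 ≤ 2 * (a : ℝ) + 1 - n := by linarith
  have ha1 : (a : ℝ) + 1 ≤ n := by linarith
  have key := binomTail_mul_le_exp_mul_binomTail hab hb2 hbℓ
  have hTa := binomTail_nonneg n a
  have hscaled : binomTail n a * n / 2 ≤ exp 40 * n * binomTail n b :=
    calc binomTail n a * n / 2 = binomTail n a * (x / 2) * E := by rw [← hEx]; ring
      _ ≤ binomTail n a * (2 * a + 1 - n) * (ℓ + 1) :=
          mul_le_mul (mul_le_mul_of_nonneg_left h2a hTa) (by linarith) (by linarith)
            (mul_nonneg hTa (by linarith))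
      _ ≤ _ := key
      _ ≤ exp 40 * n * binomTail n b := by gcongr; exact binomTail_nonneg n b
  exact le_of_mul_le_mul_right (by linarith) (by linarith : (0 : ℝ) < n)

theorem rademacher_tail_ratio_bounded_general (w m : ℕ → ℝ)
    (hw : ∀ n, 1 ≤ w n) (hm : ∀ n, 1 ≤ m n)
    (h1 : (fun n : ℕ => w n * m n) =o[atTop] fun n : ℕ => Real.sqrt n) :
    ∃ C : ℝ, ∀ᶠ n in atTop,
      radTailCount n (w n * Real.sqrt n - m n)
        ≤ C * radTailCount n (w n * Real.sqrt n + m n) := by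
  refine ⟨2 * exp 40, ?_⟩
  filter_upwards [h1.def (by norm_num : (0 : ℝ) < 1 / 20), eventually_gt_atTop 0] with n hwm hn
  have hs : 0 < √(n : ℝ) := sqrt_pos.mpr (by exact_mod_cast hn)
  have hss : √(n : ℝ) * √(n : ℝ) = n := mul_self_sqrt (Nat.cast_nonneg n)
  have hw1 := hw n
  have hm1 := hm n
  rw [norm_of_nonneg (by positivity), norm_of_nonneg hs.le] at hwm
  have hwm' : w n ≤ w n * m n := le_mul_of_one_le_right (by linarith) hm1
  have hwm_s := mul_le_mul_of_nonneg_right hwm hs.le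
  refine radTailCount_sub_le n hm1 (by positivity) ?_ ?_ ?_
  · rw [mul_pow, sq_sqrt (Nat.cast_nonneg n)]
    exact le_mul_of_one_le_left (Nat.cast_nonneg n) (one_le_pow₀ hw1)
  · nlinarith [mul_le_mul_of_nonneg_right hwm' hs.le]
  · nlinarith

/-- If `w_n, m_n ≥ 1`, `w_n·m_n = o(√n)` and `w_n⁵ = o(n^{3/2})`, then
`P(S_n ≥ w_n√n - m_n) / P(S_n ≥ w_n√n + m_n) = O(1)`: there is a constant `C` with
`P(S_n ≥ w_n√n - m_n) ≤ C·P(S_n ≥ w_n√n + m_n)` for all large `n`. -/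
theorem rademacher_tail_ratio_bounded (w m : ℕ → ℝ)
    (hw : ∀ n, 1 ≤ w n) (hm : ∀ n, 1 ≤ m n)
    (h1 : (fun n : ℕ => w n * m n) =o[atTop] fun n : ℕ => Real.sqrt n)
    (h2 : (fun n : ℕ => (w n) ^ 5) =o[atTop] fun n : ℕ => (n : ℝ) ^ ((3 : ℝ) / 2)) :
    ∃ C : ℝ, ∀ᶠ n in atTop,
      radTailCount n (w n * Real.sqrt n - m n)
        ≤ C * radTailCount n (w n * Real.sqrt n + m n) :=
  rademacher_tail_ratio_bounded_general w m hw hm h1
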